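/- (Conditional mean of the D-ZeroSARAH estimator.) Fix x, x' ∈ ℝ^d, v' ∈ ℝ^d, vectors y_{i,j} ∈ ℝ^d (1 ≤ i ≤ n, 1 ≤ j ≤ m), λ ∈ ℝ, 1 ≤ s ≤ n and 1 ≤ b ≤ m. Then the D-ZeroSARAH gradient estimator satisfies E_{S,{I_i}}[v(S,{I_i}) − ∇f(x)] = (1 − λ)(v' − ∇f(x')). -/

import Mathlib

/-!
The expectation is linear, so everything reduces to the mean of a minibatch sum
`∑_{i ∈ S} ∑_{j ∈ I_i} z_{i,j}`. A fixed client lies in a fraction `s / n` of the size-`s`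
subsets `S`; since the `I_i` are independent, the marginal law of each `I_i` is uniform on the
size-`b` subsets, so a fixed index lies in `I_i` with probability `b / m`. Hence the minibatch
sum has mean `(s b / (n m)) ∑_{i,j} z_{i,j}`, and after the normalisation by `1 / (s b)` the
terms in `x'` and in `y` cancel in mean, leaving `(1 - λ)(v' - ∇f(x'))`.
-/

noncomputable section

/-- The global average function `f(x) = (1/(nm)) ∑ᵢ∑ⱼ f_{i,j}(x)`. -/
noncomputable def dAvgF {d n m : ℕ}
    (f : Fin n → Fin m → EuclideanSpace ℝ (Fin d) → ℝ) :
    EuclideanSpace ℝ (Fin d) → ℝ :=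
  fun z => ((n : ℝ) * (m : ℝ))⁻¹ * ∑ i, ∑ j, f i j z

/-- Expectation over a uniformly random size-`s` subset `S ⊆ {1,…,n}` together with,
independently for each client, a uniformly random size-`b` subset of `{1,…,m}`
(real-valued functional). -/
noncomputable def dExp (n m s b : ℕ)
    (g : Finset (Fin n) → (Fin n → Finset (Fin m)) → ℝ) : ℝ :=
  (∑ S ∈ Finset.powersetCard s (Finset.univ : Finset (Fin n)),
    ∑ σ ∈ Finset.univ.filter
      (fun σ : Fin n → Finset (Fin m) => ∀ i, (σ i).card = b), g S σ) /
  (((Finset.powersetCard s (Finset.univ : Finset (Fin n))).card : ℝ) *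
    ((Finset.univ.filter
      (fun σ : Fin n → Finset (Fin m) => ∀ i, (σ i).card = b)).card : ℝ))

/-- The D-ZeroSARAH gradient estimator. -/
noncomputable def dEst {d n m : ℕ}
    (f : Fin n → Fin m → EuclideanSpace ℝ (Fin d) → ℝ)
    (x x' v' : EuclideanSpace ℝ (Fin d))
    (y : Fin n → Fin m → EuclideanSpace ℝ (Fin d))
    (lam : ℝ) (s b : ℕ)
    (S : Finset (Fin n)) (σ : Fin n → Finset (Fin m)) : EuclideanSpace ℝ (Fin d) :=
  ((s : ℝ) * (b : ℝ))⁻¹ •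
      ∑ i ∈ S, ∑ j ∈ σ i, (gradient (f i j) x - gradient (f i j) x')
    + (1 - lam) • v'
    + lam • (((s : ℝ) * (b : ℝ))⁻¹ •
          ∑ i ∈ S, ∑ j ∈ σ i, (gradient (f i j) x' - y i j)
        + ((n : ℝ) * (m : ℝ))⁻¹ • ∑ i, ∑ j, y i j)

/-- Expectation over a uniformly random size-`s` subset `S ⊆ {1,…,n}` together with,
independently for each client, a uniformly random size-`b` subset of `{1,…,m}`
(vector-valued functional). -/
noncomputable def dExpV {d : ℕ} (n m s b : ℕ)
    (g : Finset (Fin n) → (Fin n → Finset (Fin m)) → EuclideanSpace ℝ (Fin d)) :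
    EuclideanSpace ℝ (Fin d) :=
  (((Finset.powersetCard s (Finset.univ : Finset (Fin n))).card : ℝ) *
    ((Finset.univ.filter
      (fun σ : Fin n → Finset (Fin m) => ∀ i, (σ i).card = b)).card : ℝ))⁻¹ •
    ∑ S ∈ Finset.powersetCard s (Finset.univ : Finset (Fin n)),
      ∑ σ ∈ Finset.univ.filter
        (fun σ : Fin n → Finset (Fin m) => ∀ i, (σ i).card = b), g S σ

open Finset

namespace Finset

variable {α M : Type*} [DecidableEq α] [AddCommMonoid M]

/-- Double counting: each `a ∈ t` lies in `(#t - 1).choose k` of the `(k + 1)`-subsets of `t`. -/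
theorem sum_powersetCard_succ_sum (t : Finset α) (k : ℕ) (w : α → M) :
    ∑ S ∈ t.powersetCard (k + 1), ∑ a ∈ S, w a = (#t - 1).choose k • ∑ a ∈ t, w a := by
  rw [sum_comm' (t' := t) (s' := fun a => {S ∈ t.powersetCard (k + 1) | {a} ⊆ S})
    (fun S a => by simp only [mem_filter, mem_powersetCard, singleton_subset_iff]; grind),
    smul_sum]
  refine sum_congr rfl fun a ha => ?_
  rw [sum_const, card_filter_powersetCard_subset _ _ _ (singleton_subset_iff.2 ha)
    (by simp), card_singleton, Nat.add_sub_cancel]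

theorem inv_card_smul_sum_powersetCard_sum {K : Type*} [Field K] [CharZero K] [Module K M]
    (t : Finset α) {k : ℕ} (hk : k ≤ #t) (w : α → M) :
    (#(t.powersetCard k) : K)⁻¹ • ∑ S ∈ t.powersetCard k, ∑ a ∈ S, w a
      = ((k : K) / #t) • ∑ a ∈ t, w a := by
  rcases k with _ | k
  · simp
  obtain ⟨N, hN⟩ : ∃ N, #t = N + 1 := ⟨#t - 1, by omega⟩
  rw [sum_powersetCard_succ_sum, card_powersetCard, ← Nat.cast_smul_eq_nsmul K, smul_smul, hN,
    Nat.add_sub_cancel]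
  congr 1
  have hchoose : ((N + 1 : ℕ) : K) * N.choose k = (N + 1).choose (k + 1) * (k + 1 : ℕ) := by
    exact_mod_cast Nat.add_one_mul_choose_eq N k
  have hpos : ((N + 1).choose (k + 1) : K) ≠ 0 := by
    exact_mod_cast (Nat.choose_pos (by omega)).ne'
  field_simp
  push_cast at hchoose ⊢
  linear_combination hchoose

end Finset

namespace Fintype

theorem inv_card_smul_sum_piFinset_apply {ι κ K M : Type*} [DecidableEq ι] [Fintype ι]
    [Field K] [CharZero K] [AddCommMonoid M] [Module K M] (s : Finset κ) (i : ι) (f : κ → M) :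
    (#(piFinset fun _ : ι => s) : K)⁻¹ • ∑ g ∈ piFinset (fun _ : ι => s), f (g i)
      = (#s : K)⁻¹ • ∑ u ∈ s, f u := by
  have hι : card ι = card ι - 1 + 1 := (Nat.sub_add_cancel (card_pos_iff.2 ⟨i⟩)).symm
  rw [sum_piFinset_apply, card_piFinset, prod_const, card_univ, ← Nat.cast_smul_eq_nsmul K,
    smul_smul, hι, Nat.add_sub_cancel]
  rcases eq_or_ne #s 0 with hs | hs
  · simp [Finset.card_eq_zero.1 hs]
  · have hsK : (#s : K) ≠ 0 := Nat.cast_ne_zero.2 hs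
    congr 1
    push_cast [pow_succ]
    field_simp

end Fintype

section Estimator

variable {d n m : ℕ}

theorem filter_forall_card_eq_eq_piFinset (b : ℕ) :
    ({σ : Fin n → Finset (Fin m) | ∀ i, #(σ i) = b} : Finset _)
      = Fintype.piFinset fun _ => powersetCard b univ := by
  ext σ
  simp [Fintype.mem_piFinset]

theorem dExpV_eq_inv_card_smul_sum (s b : ℕ)
    (g : Finset (Fin n) → (Fin n → Finset (Fin m)) → EuclideanSpace ℝ (Fin d)) :
    dExpV n m s b g = (#(powersetCard s (univ : Finset (Fin n))) : ℝ)⁻¹ •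
      ∑ S ∈ powersetCard s univ,
        (#(Fintype.piFinset fun _ : Fin n => powersetCard b (univ : Finset (Fin m))) : ℝ)⁻¹ •
          ∑ σ ∈ Fintype.piFinset (fun _ => powersetCard b univ), g S σ := by
  rw [dExpV, filter_forall_card_eq_eq_piFinset, ← smul_sum, smul_smul, mul_inv]

theorem dExpV_add (s b : ℕ)
    (g h : Finset (Fin n) → (Fin n → Finset (Fin m)) → EuclideanSpace ℝ (Fin d)) :
    dExpV n m s b (fun S σ => g S σ + h S σ) = dExpV n m s b g + dExpV n m s b h := by
  simp only [dExpV, sum_add_distrib, smul_add]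

theorem dExpV_sub (s b : ℕ)
    (g h : Finset (Fin n) → (Fin n → Finset (Fin m)) → EuclideanSpace ℝ (Fin d)) :
    dExpV n m s b (fun S σ => g S σ - h S σ) = dExpV n m s b g - dExpV n m s b h := by
  simp only [dExpV, sum_sub_distrib, smul_sub]

theorem dExpV_smul (s b : ℕ) (r : ℝ)
    (g : Finset (Fin n) → (Fin n → Finset (Fin m)) → EuclideanSpace ℝ (Fin d)) :
    dExpV n m s b (fun S σ => r • g S σ) = r • dExpV n m s b g := by
  simp only [dExpV, ← smul_sum, smul_comm r]

theorem dExpV_const {s b : ℕ} (hsn : s ≤ n) (hbm : b ≤ m) (c : EuclideanSpace ℝ (Fin d)) :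
    dExpV n m s b (fun _ _ => c) = c := by
  have hP : (#(powersetCard s (univ : Finset (Fin n))) : ℝ) ≠ 0 := by
    simpa using (Nat.choose_pos hsn).ne'
  have hT : (#(Fintype.piFinset fun _ : Fin n => powersetCard b (univ : Finset (Fin m))) : ℝ)
      ≠ 0 := by
    rw [Fintype.card_piFinset, prod_const, card_powersetCard, card_univ, Fintype.card_fin]
    exact_mod_cast pow_ne_zero _ (Nat.choose_pos hbm).ne'
  simp only [dExpV_eq_inv_card_smul_sum, sum_const, ← Nat.cast_smul_eq_nsmul ℝ, smul_smul,
    inv_mul_cancel₀ hP, inv_mul_cancel₀ hT, one_smul]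

theorem dExpV_minibatch_sum {s b : ℕ} (hsn : s ≤ n) (hbm : b ≤ m)
    (z : Fin n → Fin m → EuclideanSpace ℝ (Fin d)) :
    dExpV n m s b (fun S σ => ∑ i ∈ S, ∑ j ∈ σ i, z i j)
      = ((s : ℝ) * b / (n * m)) • ∑ i, ∑ j, z i j := by
  have hclient (i : Fin n) :
      (#(Fintype.piFinset fun _ : Fin n => powersetCard b (univ : Finset (Fin m))) : ℝ)⁻¹ •
        ∑ σ ∈ Fintype.piFinset (fun _ => powersetCard b univ), ∑ j ∈ σ i, z i j
      = ((b : ℝ) / m) • ∑ j, z i j := by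
    rw [Fintype.inv_card_smul_sum_piFinset_apply (f := fun U => ∑ j ∈ U, z i j),
      inv_card_smul_sum_powersetCard_sum _ (by simpa using hbm), card_univ, Fintype.card_fin]
  have hsample (S : Finset (Fin n)) :
      (#(Fintype.piFinset fun _ : Fin n => powersetCard b (univ : Finset (Fin m))) : ℝ)⁻¹ •
        ∑ σ ∈ Fintype.piFinset (fun _ => powersetCard b univ), ∑ i ∈ S, ∑ j ∈ σ i, z i j
      = ∑ i ∈ S, ((b : ℝ) / m) • ∑ j, z i j := by
    rw [sum_comm, smul_sum]
    exact sum_congr rfl fun i _ => hclient i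
  rw [dExpV_eq_inv_card_smul_sum]
  simp only [hsample]
  rw [inv_card_smul_sum_powersetCard_sum _ (by simpa using hsn), card_univ, Fintype.card_fin,
    ← smul_sum, smul_smul, div_mul_div_comm]

theorem gradient_dAvgF (f : Fin n → Fin m → EuclideanSpace ℝ (Fin d) → ℝ)
    (hdiff : ∀ i j, Differentiable ℝ (f i j)) (z : EuclideanSpace ℝ (Fin d)) :
    gradient (dAvgF f) z = ((n : ℝ) * m)⁻¹ • ∑ i, ∑ j, gradient (f i j) z := by
  have hrow : ∀ i, DifferentiableAt ℝ (fun w => ∑ j, f i j w) z :=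
    fun i => DifferentiableAt.fun_sum fun j _ => hdiff i j z
  unfold gradient dAvgF
  rw [fderiv_const_mul (DifferentiableAt.fun_sum fun i _ => hrow i),
    fderiv_fun_sum fun i _ => hrow i]
  simp only [fderiv_fun_sum fun j _ => hdiff _ j z, map_smul, map_sum]

end Estimator

theorem dzerosarah_estimator_mean_general {d n m : ℕ}
    (f : Fin n → Fin m → EuclideanSpace ℝ (Fin d) → ℝ)
    (hdiff : ∀ i j, Differentiable ℝ (f i j))
    (x x' v' : EuclideanSpace ℝ (Fin d))
    (y : Fin n → Fin m → EuclideanSpace ℝ (Fin d))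
    (lam : ℝ) (s b : ℕ) (hs1 : 1 ≤ s) (hsn : s ≤ n) (hb1 : 1 ≤ b) (hbm : b ≤ m) :
    dExpV n m s b (fun S σ => dEst f x x' v' y lam s b S σ - gradient (dAvgF f) x)
      = (1 - lam) • (v' - gradient (dAvgF f) x') := by
  have hs : (s : ℝ) ≠ 0 := Nat.cast_ne_zero.2 (by omega)
  have hb : (b : ℝ) ≠ 0 := Nat.cast_ne_zero.2 (by omega)
  simp only [dEst, smul_add, dExpV_sub, dExpV_add, dExpV_smul, dExpV_const hsn hbm,
    dExpV_minibatch_sum hsn hbm, gradient_dAvgF f hdiff, sum_sub_distrib]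
  match_scalars <;> field_simp <;> ring

/-- Conditional mean of the D-ZeroSARAH estimator. -/
theorem dzerosarah_estimator_mean {d n m : ℕ} (hd : 1 ≤ d) (hn : 1 ≤ n) (hm : 1 ≤ m)
    (f : Fin n → Fin m → EuclideanSpace ℝ (Fin d) → ℝ)
    (hdiff : ∀ i j, Differentiable ℝ (f i j))
    (x x' v' : EuclideanSpace ℝ (Fin d))
    (y : Fin n → Fin m → EuclideanSpace ℝ (Fin d))
    (lam : ℝ) (s b : ℕ) (hs1 : 1 ≤ s) (hsn : s ≤ n) (hb1 : 1 ≤ b) (hbm : b ≤ m) :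
    dExpV n m s b (fun S σ => dEst f x x' v' y lam s b S σ - gradient (dAvgF f) x)
      = (1 - lam) • (v' - gradient (dAvgF f) x') :=
  dzerosarah_estimator_mean_general f hdiff x x' v' y lam s b hs1 hsn hb1 hbm
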